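/- arXiv:2011.05276 — 3 statements merged into one kernel-verified Lean document; each statement's English description precedes it below -/
import Mathlib

section
/- The abelianization of the binary octahedral group 2D₃ is isomorphic to the cyclic group of order 2. -/
noncomputable section

open Quaternion

/-- The unit quaternion `r = (i + j)/√2`. -/
def qr : ℍ[ℝ] := ⟨0, (Real.sqrt 2)⁻¹, (Real.sqrt 2)⁻¹, 0⟩

/-- The unit quaternion `s = (1 + i + j + k)/2`. -/
def qs : ℍ[ℝ] := ⟨1/2, 1/2, 1/2, 1/2⟩

/-- The unit quaternion `t = (1 + i)/√2`. -/
def qt : ℍ[ℝ] := ⟨(Real.sqrt 2)⁻¹, (Real.sqrt 2)⁻¹, 0, 0⟩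

lemma normSq_qr : normSq qr = 1 := by
  rw [normSq_def']
  show (0:ℝ)^2 + ((Real.sqrt 2)⁻¹)^2 + ((Real.sqrt 2)⁻¹)^2 + (0:ℝ)^2 = 1
  rw [inv_pow, Real.sq_sqrt (by norm_num : (0:ℝ) ≤ 2)]
  norm_num

lemma normSq_qs : normSq qs = 1 := by
  rw [normSq_def']
  show ((1:ℝ)/2)^2 + ((1:ℝ)/2)^2 + ((1:ℝ)/2)^2 + ((1:ℝ)/2)^2 = 1
  norm_num

lemma normSq_qt : normSq qt = 1 := by
  rw [normSq_def']
  show ((Real.sqrt 2)⁻¹)^2 + ((Real.sqrt 2)⁻¹)^2 + (0:ℝ)^2 + (0:ℝ)^2 = 1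
  rw [inv_pow, Real.sq_sqrt (by norm_num : (0:ℝ) ≤ 2)]
  norm_num

lemma mem_unitary_of_normSq {q : ℍ[ℝ]} (h : normSq q = 1) : q ∈ unitary ℍ[ℝ] := by
  rw [Unitary.mem_iff]
  constructor
  · rw [star_mul_self, h]; exact_mod_cast rfl
  · rw [self_mul_star, h]; exact_mod_cast rfl

/-- The binary octahedral group `2D₃`: the subgroup of the group of unit quaternions
generated by `r`, `s` and `t`. -/
def binOct : Subgroup (unitary ℍ[ℝ]) :=
  Subgroup.closure {⟨qr, mem_unitary_of_normSq normSq_qr⟩,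
    ⟨qs, mem_unitary_of_normSq normSq_qs⟩, ⟨qt, mem_unitary_of_normSq normSq_qt⟩}


-- ### Auxiliary: quaternion identities among the generators

lemma sqrt2_aux : Real.sqrt 2 * Real.sqrt 2 = 2 := Real.mul_self_sqrt (by norm_num)

lemma quat_idA : qs * qt = qr := by
  ext <;> simp only [Quaternion.re_mul, Quaternion.imI_mul, Quaternion.imJ_mul,
    Quaternion.imK_mul] <;> simp [qr, qs, qt] <;> ring

lemma quat_idB : qt * qr = qs * qs := by
  ext <;> simp only [Quaternion.re_mul, Quaternion.imI_mul, Quaternion.imJ_mul,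
    Quaternion.imK_mul] <;> simp [qr, qs, qt] <;> field_simp <;> nlinarith [sqrt2_aux]

lemma quat_idC : qs * (qs * qs) = (qt * qt) * (qt * qt) := by
  ext <;> simp only [Quaternion.re_mul, Quaternion.imI_mul, Quaternion.imJ_mul,
    Quaternion.imK_mul] <;> simp [qr, qs, qt] <;> field_simp <;> nlinarith [sqrt2_aux]

-- ### The rationality grading on quaternions

def IsRat (x : ℝ) : Prop := ∃ a : ℚ, (a : ℝ) = x

lemma IsRat.add {x y : ℝ} (hx : IsRat x) (hy : IsRat y) : IsRat (x + y) := by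
  obtain ⟨a, rfl⟩ := hx; obtain ⟨b, rfl⟩ := hy; exact ⟨a + b, by push_cast; ring⟩
lemma IsRat.mul {x y : ℝ} (hx : IsRat x) (hy : IsRat y) : IsRat (x * y) := by
  obtain ⟨a, rfl⟩ := hx; obtain ⟨b, rfl⟩ := hy; exact ⟨a * b, by push_cast; ring⟩
lemma IsRat.neg {x : ℝ} (hx : IsRat x) : IsRat (-x) := by
  obtain ⟨a, rfl⟩ := hx; exact ⟨-a, by push_cast; ring⟩
lemma IsRat.sub {x y : ℝ} (hx : IsRat x) (hy : IsRat y) : IsRat (x - y) := by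
  simpa [sub_eq_add_neg] using hx.add hy.neg
lemma isRat_zero : IsRat 0 := ⟨0, by norm_num⟩
lemma isRat_one : IsRat 1 := ⟨1, by norm_num⟩
lemma not_isRat_sqrt2 : ¬ IsRat (Real.sqrt 2) := by
  rintro ⟨a, ha⟩; exact irrational_sqrt_two ⟨a, ha⟩

/-- `q` has all rational coordinates. -/
def gA (q : ℍ[ℝ]) : Prop := IsRat q.re ∧ IsRat q.imI ∧ IsRat q.imJ ∧ IsRat q.imK
/-- `q` has all coordinates rational multiples of `√2`. -/
def gB (q : ℍ[ℝ]) : Prop := IsRat (Real.sqrt 2 * q.re) ∧ IsRat (Real.sqrt 2 * q.imI) ∧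
    IsRat (Real.sqrt 2 * q.imJ) ∧ IsRat (Real.sqrt 2 * q.imK)

lemma gA.mul {p q : ℍ[ℝ]} (hp : gA p) (hq : gA q) : gA (p * q) := by
  obtain ⟨h1,h2,h3,h4⟩ := hp; obtain ⟨k1,k2,k3,k4⟩ := hq
  exact ⟨by rw [Quaternion.re_mul]; exact (((h1.mul k1).sub (h2.mul k2)).sub (h3.mul k3)).sub (h4.mul k4),
    by rw [Quaternion.imI_mul]; exact (((h1.mul k2).add (h2.mul k1)).add (h3.mul k4)).sub (h4.mul k3),
    by rw [Quaternion.imJ_mul]; exact (((h1.mul k3).sub (h2.mul k4)).add (h3.mul k1)).add (h4.mul k2),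
    by rw [Quaternion.imK_mul]; exact (((h1.mul k4).add (h2.mul k3)).sub (h3.mul k2)).add (h4.mul k1)⟩

lemma half_mul_expand (x y : ℝ) : Real.sqrt 2 * x * (Real.sqrt 2 * y) = 2 * (x * y) := by
  rw [mul_mul_mul_comm, sqrt2_aux]

lemma gB.mulB {p q : ℍ[ℝ]} (hp : gB p) (hq : gB q) : gA (p * q) := by
  obtain ⟨h1,h2,h3,h4⟩ := hp; obtain ⟨k1,k2,k3,k4⟩ := hq
  have key2 : ∀ x y : ℝ, IsRat (Real.sqrt 2 * x) → IsRat (Real.sqrt 2 * y) → IsRat (x * y) := by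
    intro x y hx hy
    obtain ⟨a, ha⟩ := (show IsRat (2 * (x * y)) by rw [← half_mul_expand]; exact hx.mul hy)
    exact ⟨a / 2, by push_cast; linarith⟩
  exact ⟨by rw [Quaternion.re_mul]; exact (((key2 _ _ h1 k1).sub (key2 _ _ h2 k2)).sub (key2 _ _ h3 k3)).sub (key2 _ _ h4 k4),
    by rw [Quaternion.imI_mul]; exact (((key2 _ _ h1 k2).add (key2 _ _ h2 k1)).add (key2 _ _ h3 k4)).sub (key2 _ _ h4 k3),
    by rw [Quaternion.imJ_mul]; exact (((key2 _ _ h1 k3).sub (key2 _ _ h2 k4)).add (key2 _ _ h3 k1)).add (key2 _ _ h4 k2),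
    by rw [Quaternion.imK_mul]; exact (((key2 _ _ h1 k4).add (key2 _ _ h2 k3)).sub (key2 _ _ h3 k2)).add (key2 _ _ h4 k1)⟩

lemma gA.mulB {p q : ℍ[ℝ]} (hp : gA p) (hq : gB q) : gB (p * q) := by
  obtain ⟨h1,h2,h3,h4⟩ := hp; obtain ⟨k1,k2,k3,k4⟩ := hq
  have key : ∀ x y : ℝ, IsRat x → IsRat (Real.sqrt 2 * y) → IsRat (Real.sqrt 2 * (x * y)) := by
    intro x y hx hy
    obtain ⟨a, ha⟩ := hx.mul hy; exact ⟨a, by rw [ha]; ring⟩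
  exact ⟨by rw [Quaternion.re_mul]; simp only [mul_add, mul_sub]; exact (((key _ _ h1 k1).sub (key _ _ h2 k2)).sub (key _ _ h3 k3)).sub (key _ _ h4 k4),
    by rw [Quaternion.imI_mul]; simp only [mul_add, mul_sub]; exact (((key _ _ h1 k2).add (key _ _ h2 k1)).add (key _ _ h3 k4)).sub (key _ _ h4 k3),
    by rw [Quaternion.imJ_mul]; simp only [mul_add, mul_sub]; exact (((key _ _ h1 k3).sub (key _ _ h2 k4)).add (key _ _ h3 k1)).add (key _ _ h4 k2),
    by rw [Quaternion.imK_mul]; simp only [mul_add, mul_sub]; exact (((key _ _ h1 k4).add (key _ _ h2 k3)).sub (key _ _ h3 k2)).add (key _ _ h4 k1)⟩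

lemma gB.mulA {p q : ℍ[ℝ]} (hp : gB p) (hq : gA q) : gB (p * q) := by
  obtain ⟨h1,h2,h3,h4⟩ := hp; obtain ⟨k1,k2,k3,k4⟩ := hq
  have key : ∀ x y : ℝ, IsRat (Real.sqrt 2 * x) → IsRat y → IsRat (Real.sqrt 2 * (x * y)) := by
    intro x y hx hy
    obtain ⟨a, ha⟩ := hx.mul hy; exact ⟨a, by rw [ha]; ring⟩
  exact ⟨by rw [Quaternion.re_mul]; simp only [mul_add, mul_sub]; exact (((key _ _ h1 k1).sub (key _ _ h2 k2)).sub (key _ _ h3 k3)).sub (key _ _ h4 k4),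
    by rw [Quaternion.imI_mul]; simp only [mul_add, mul_sub]; exact (((key _ _ h1 k2).add (key _ _ h2 k1)).add (key _ _ h3 k4)).sub (key _ _ h4 k3),
    by rw [Quaternion.imJ_mul]; simp only [mul_add, mul_sub]; exact (((key _ _ h1 k3).sub (key _ _ h2 k4)).add (key _ _ h3 k1)).add (key _ _ h4 k2),
    by rw [Quaternion.imK_mul]; simp only [mul_add, mul_sub]; exact (((key _ _ h1 k4).add (key _ _ h2 k3)).sub (key _ _ h3 k2)).add (key _ _ h4 k1)⟩

lemma gA.star {q : ℍ[ℝ]} (h : gA q) : gA (star q) :=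
  ⟨by simpa using h.1, by simpa using h.2.1.neg, by simpa using h.2.2.1.neg,
    by simpa using h.2.2.2.neg⟩
lemma gB.star {q : ℍ[ℝ]} (h : gB q) : gB (star q) := by
  refine ⟨by simpa using h.1, ?_, ?_, ?_⟩ <;>
  simp [Quaternion.imI_star, Quaternion.imJ_star, Quaternion.imK_star, mul_neg]
  exacts [h.2.1.neg, h.2.2.1.neg, h.2.2.2.neg]

lemma not_gA_and_gB {q : ℍ[ℝ]} (hq : q ≠ 0) : ¬ (gA q ∧ gB q) := by
  rintro ⟨hA, hB⟩
  have key : ∀ x : ℝ, IsRat x → IsRat (Real.sqrt 2 * x) → x = 0 := by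
    intro x hx hsx
    by_contra hne
    obtain ⟨a, ha⟩ := hx; obtain ⟨b, hb⟩ := hsx
    apply not_isRat_sqrt2
    refine ⟨b / a, ?_⟩
    have ha0 : (a : ℝ) ≠ 0 := by rw [ha]; exact hne
    push_cast
    rw [ha, hb]
    field_simp
  apply hq
  ext
  · exact key _ hA.1 hB.1
  · exact key _ hA.2.1 hB.2.1
  · exact key _ hA.2.2.1 hB.2.2.1
  · exact key _ hA.2.2.2 hB.2.2.2

-- ### The parity subgroup and homomorphism

/-- The subgroup of unit quaternions whose coordinates are all rational or all
rational multiples of `√2`. -/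
def parityGrp : Subgroup (unitary ℍ[ℝ]) where
  carrier := {u | gA (u : ℍ[ℝ]) ∨ gB (u : ℍ[ℝ])}
  one_mem' := Or.inl ⟨isRat_one, isRat_zero, isRat_zero, isRat_zero⟩
  mul_mem' := by
    rintro a b (ha | ha) (hb | hb)
    · exact Or.inl (ha.mul hb)
    · exact Or.inr (ha.mulB hb)
    · exact Or.inr (ha.mulA hb)
    · exact Or.inl (ha.mulB hb)
  inv_mem' := by
    rintro a (ha | ha)
    · left
      have : ((a⁻¹ : unitary ℍ[ℝ]) : ℍ[ℝ]) = star (a : ℍ[ℝ]) := by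
        rw [← Unitary.star_eq_inv]; rfl
      rw [this]; exact ha.star
    · right
      have : ((a⁻¹ : unitary ℍ[ℝ]) : ℍ[ℝ]) = star (a : ℍ[ℝ]) := by
        rw [← Unitary.star_eq_inv]; rfl
      rw [this]; exact ha.star

lemma unitary_ne_zero (u : unitary ℍ[ℝ]) : (u : ℍ[ℝ]) ≠ 0 := by
  intro h
  have := Unitary.coe_star_mul_self u
  rw [h, mul_zero] at this
  exact zero_ne_one this

open Classical in
/-- The parity homomorphism. -/
def parityHom : parityGrp →* Multiplicative (ZMod 2) where
  toFun u := if gA (u : ℍ[ℝ]) then 1 else Multiplicative.ofAdd 1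
  map_one' := by
    show (if gA (((1 : parityGrp) : unitary ℍ[ℝ]) : ℍ[ℝ]) then (1 : Multiplicative (ZMod 2))
      else Multiplicative.ofAdd 1) = 1
    rw [if_pos]
    exact ⟨⟨1, by simp⟩, ⟨0, by simp⟩, ⟨0, by simp⟩, ⟨0, by simp⟩⟩
  map_mul' := by
    rintro ⟨a, ha⟩ ⟨b, hb⟩
    have hna : ¬ (gA (a : ℍ[ℝ]) ∧ gB (a : ℍ[ℝ])) := not_gA_and_gB (unitary_ne_zero a)
    have hnb : ¬ (gA (b : ℍ[ℝ]) ∧ gB (b : ℍ[ℝ])) := not_gA_and_gB (unitary_ne_zero b)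
    have hcoe : ((⟨a, ha⟩ * ⟨b, hb⟩ : parityGrp) : ℍ[ℝ]) = (a : ℍ[ℝ]) * (b : ℍ[ℝ]) := rfl
    show (if gA (((⟨a, ha⟩ * ⟨b, hb⟩ : parityGrp) : unitary ℍ[ℝ]) : ℍ[ℝ])
        then (1 : Multiplicative (ZMod 2)) else Multiplicative.ofAdd 1)
      = (if gA ((a : unitary ℍ[ℝ]) : ℍ[ℝ]) then 1 else Multiplicative.ofAdd 1) *
        (if gA ((b : unitary ℍ[ℝ]) : ℍ[ℝ]) then 1 else Multiplicative.ofAdd 1)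
    rcases ha with ha | ha <;> rcases hb with hb | hb
    · rw [if_pos ha, if_pos hb, if_pos (show gA (((⟨a, Or.inl ha⟩ * ⟨b, Or.inl hb⟩ :
        parityGrp) : unitary ℍ[ℝ]) : ℍ[ℝ]) from ha.mul hb), one_mul]
    · rw [if_pos ha, if_neg (fun h => hnb ⟨h, hb⟩), if_neg, one_mul]
      intro h
      exact not_gA_and_gB (mul_ne_zero (unitary_ne_zero a) (unitary_ne_zero b))
        ⟨by rw [← hcoe]; exact h, by rw [← hcoe]; exact ha.mulB hb⟩
    · rw [if_neg (fun h => hna ⟨h, ha⟩), if_pos hb, if_neg, mul_one]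
      intro h
      exact not_gA_and_gB (mul_ne_zero (unitary_ne_zero a) (unitary_ne_zero b))
        ⟨by rw [← hcoe]; exact h, by rw [← hcoe]; exact ha.mulA hb⟩
    · rw [if_neg (fun h => hna ⟨h, ha⟩), if_neg (fun h => hnb ⟨h, hb⟩),
        if_pos (show gA (((⟨a,Or.inr ha⟩ * ⟨b,Or.inr hb⟩ : parityGrp) : unitary ℍ[ℝ]) : ℍ[ℝ]) by
          rw [hcoe]; exact ha.mulB hb)]
      decide

-- ### Generators as elements

def ur : unitary ℍ[ℝ] := ⟨qr, mem_unitary_of_normSq normSq_qr⟩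
def us : unitary ℍ[ℝ] := ⟨qs, mem_unitary_of_normSq normSq_qs⟩
def ut : unitary ℍ[ℝ] := ⟨qt, mem_unitary_of_normSq normSq_qt⟩

lemma binOct_eq : binOct = Subgroup.closure {ur, us, ut} := rfl

lemma ur_mem : ur ∈ binOct := Subgroup.subset_closure (by left; rfl)
lemma us_mem : us ∈ binOct := Subgroup.subset_closure (by right; left; rfl)
lemma ut_mem : ut ∈ binOct := Subgroup.subset_closure (by right; right; rfl)

def br : binOct := ⟨ur, ur_mem⟩
def bs : binOct := ⟨us, us_mem⟩
def bt : binOct := ⟨ut, ut_mem⟩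

lemma b_idA : bs * bt = br := Subtype.ext (Subtype.ext quat_idA)
lemma b_idB : bt * br = bs * bs := Subtype.ext (Subtype.ext quat_idB)
lemma b_idC : bs * (bs * bs) = (bt * bt) * (bt * bt) := Subtype.ext (Subtype.ext quat_idC)

-- ### binOct ≤ parityGrp

lemma gB_qr : gB qr := by
  constructor
  · exact ⟨0, by simp [qr]⟩
  refine ⟨⟨1, ?_⟩, ⟨1, ?_⟩, ⟨0, ?_⟩⟩ <;>
    simp [qr, Real.sqrt_ne_zero', mul_inv_cancel₀]
lemma gB_qt : gB qt := by
  refine ⟨⟨1, ?_⟩, ⟨1, ?_⟩, ⟨0, ?_⟩, ⟨0, ?_⟩⟩ <;>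
    simp [qt, Real.sqrt_ne_zero', mul_inv_cancel₀]
lemma gA_qs : gA qs := ⟨⟨1/2, by norm_num [qs]⟩, ⟨1/2, by norm_num [qs]⟩,
  ⟨1/2, by norm_num [qs]⟩, ⟨1/2, by norm_num [qs]⟩⟩

lemma binOct_le_parity : binOct ≤ parityGrp := by
  rw [binOct_eq, Subgroup.closure_le]
  rintro x (rfl | rfl | rfl)
  · exact Or.inr gB_qr
  · exact Or.inl gA_qs
  · exact Or.inr gB_qt

/-- The parity homomorphism restricted to `binOct`. -/
def φ : binOct →* Multiplicative (ZMod 2) :=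
  parityHom.comp (Subgroup.inclusion binOct_le_parity)

open Classical in
lemma φ_bt : φ bt = Multiplicative.ofAdd 1 := by
  show (if gA ((ut : unitary ℍ[ℝ]) : ℍ[ℝ]) then 1 else Multiplicative.ofAdd 1) = _
  rw [if_neg]
  intro h
  exact not_gA_and_gB (unitary_ne_zero ut) ⟨h, gB_qt⟩

-- ### The abelianization

/-- Image of `t` in the abelianization. -/
def Tbar : Abelianization binOct := Abelianization.of bt

lemma ab_idA : Abelianization.of bs * Tbar = Abelianization.of br := by
  rw [Tbar, ← map_mul, b_idA]
lemma ab_idB : Tbar * Abelianization.of br = Abelianization.of bs * Abelianization.of bs := by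
  rw [Tbar]; simp only [← map_mul]; rw [b_idB]
lemma ab_idC : Abelianization.of bs * (Abelianization.of bs * Abelianization.of bs)
    = (Tbar * Tbar) * (Tbar * Tbar) := by
  rw [Tbar]; simp only [← map_mul]; rw [b_idC]

lemma hS_eq : Abelianization.of bs = Tbar * Tbar := by
  set S := Abelianization.of bs
  have h : Tbar * (S * Tbar) = S * S := by rw [ab_idA, ab_idB]
  have h' : S * (Tbar * Tbar) = S * S := by
    rw [← mul_assoc, mul_comm S Tbar, mul_assoc]; exact h
  exact (mul_left_cancel h').symm

lemma hT2 : Tbar * Tbar = 1 := by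
  have hC := ab_idC
  rw [← hS_eq] at hC
  set S := Abelianization.of bs
  have h1 : S * (S * S) = S * S := hC
  have h2 : S * S = S := mul_left_cancel h1
  have hS1 : S = 1 := by
    have := mul_left_cancel (a := S) (by rw [h2, mul_one] : S * S = S * 1)
    exact this
  rw [← hS_eq]; exact hS1

lemma hS1 : Abelianization.of bs = 1 := hS_eq.trans hT2

lemma hR_eq : Abelianization.of br = Tbar := by
  rw [← ab_idA, hS1, one_mul]

lemma mem_closure_Tbar (x : Abelianization binOct) : x ∈ Subgroup.closure {Tbar} := by
  obtain ⟨y, rfl⟩ : ∃ y : binOct, Abelianization.of y = x := by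
    exact Quotient.exists_rep x
  have htop : (Subgroup.closure
      (((↑) : (Subgroup.closure {ur, us, ut} : Subgroup (unitary ℍ[ℝ])) → unitary ℍ[ℝ]) ⁻¹'
        {ur, us, ut}) : Subgroup binOct) = ⊤ :=
    Subgroup.closure_closure_coe_preimage
  have hy : y ∈ (⊤ : Subgroup binOct) := trivial
  rw [← htop] at hy
  refine Subgroup.closure_induction ?_ ?_ ?_ ?_ hy
  · rintro z hz
    rcases hz with hz | hz | hz
    · have : z = br := Subtype.ext hz
      rw [this, hR_eq]
      exact Subgroup.mem_closure_singleton.mpr ⟨1, by group⟩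
    · have : z = bs := Subtype.ext hz
      rw [this, hS1]
      exact one_mem _
    · have : z = bt := Subtype.ext hz
      exact this ▸ Subgroup.subset_closure rfl
  · rw [map_one]; exact one_mem _
  · intro a b _ _ ha hb
    rw [map_mul]; exact mul_mem ha hb
  · intro a _ ha
    rw [map_inv]; exact inv_mem ha

lemma ab_eq_or (x : Abelianization binOct) : x = 1 ∨ x = Tbar := by
  obtain ⟨n, rfl⟩ := Subgroup.mem_closure_singleton.mp (mem_closure_Tbar x)
  have h2 : Tbar ^ (2 : ℤ) = 1 := by rw [show (2:ℤ) = 1 + 1 by norm_num, zpow_add, zpow_one, hT2]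
  rcases Int.even_or_odd n with ⟨k, hk⟩ | ⟨k, hk⟩
  · left
    rw [hk, show k + k = 2 * k by ring, zpow_mul, h2, one_zpow]
  · right
    rw [hk, zpow_add, zpow_mul, h2, one_zpow, one_mul, zpow_one]

/-- The induced map on the abelianization. -/
def φ' : Abelianization binOct →* Multiplicative (ZMod 2) :=
  Abelianization.lift φ

lemma φ'_Tbar : φ' Tbar = Multiplicative.ofAdd 1 := by
  rw [Tbar, φ', Abelianization.lift_apply_of, φ_bt]

/-- The abelianization of the binary octahedral group `2D₃` is isomorphic to the
cyclic group of order `2`. -/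
theorem stmt2 : Nonempty (Abelianization binOct ≃* Multiplicative (ZMod 2)) := by
  refine ⟨MulEquiv.ofBijective φ' ⟨?_, ?_⟩⟩
  · intro x y hxy
    have hone : φ' (1 : Abelianization binOct) = 1 := map_one _
    have hne : (1 : Multiplicative (ZMod 2)) ≠ Multiplicative.ofAdd 1 := by decide
    rcases ab_eq_or x with rfl | rfl <;> rcases ab_eq_or y with rfl | rfl
    · rfl
    · rw [map_one, φ'_Tbar] at hxy; exact absurd hxy hne
    · rw [map_one, φ'_Tbar] at hxy; exact absurd hxy.symm hne
    · rfl
  · intro z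
    have : z = 1 ∨ z = Multiplicative.ofAdd 1 := by revert z; decide
    rcases this with rfl | rfl
    · exact ⟨1, map_one _⟩
    · exact ⟨Tbar, φ'_Tbar⟩
end
end

section
/- The coset space O(2) ⧸ B₂, equipped with the quotient topology, is homeomorphic to the circle S¹. -/
noncomputable section

/-- `O(n)`, the group of `n × n` real orthogonal matrices. -/
abbrev On (n : ℕ) := Matrix.orthogonalGroup (Fin n) ℝ

/-- `SO(n)`, the subgroup of `O(n)` of matrices of determinant `1`. -/
def SO (n : ℕ) : Subgroup (On n) where
  carrier := {A | (A : Matrix (Fin n) (Fin n) ℝ).det = 1}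
  one_mem' := by simp
  mul_mem' := by
    intro a b ha hb
    simp only [Set.mem_setOf_eq] at *
    rw [Matrix.UnitaryGroup.mul_val, Matrix.det_mul, ha, hb, mul_one]
  inv_mem' := by
    intro a ha
    simp only [Set.mem_setOf_eq] at *
    rw [Matrix.UnitaryGroup.inv_val, Matrix.star_eq_conjTranspose,
      Matrix.det_conjTranspose, ha, star_one]

/-- A signed permutation matrix: exactly one nonzero entry in each row and each column,
each nonzero entry equal to `1` or `-1`. -/
def IsSignedPerm {n : ℕ} (A : Matrix (Fin n) (Fin n) ℝ) : Prop :=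
  (∀ i, ∃! j, A i j ≠ 0) ∧ (∀ j, ∃! i, A i j ≠ 0) ∧
    ∀ i j, A i j ≠ 0 → A i j = 1 ∨ A i j = -1

lemma IsSignedPerm.one {n : ℕ} : IsSignedPerm (1 : Matrix (Fin n) (Fin n) ℝ) := by
  refine ⟨fun i => ⟨i, ?_, fun j hj => ?_⟩, fun j => ⟨j, ?_, fun i hi => ?_⟩,
    fun i j h => ?_⟩ <;> simp_all [Matrix.one_apply]

lemma IsSignedPerm.mul {n : ℕ} {A B : Matrix (Fin n) (Fin n) ℝ}
    (hA : IsSignedPerm A) (hB : IsSignedPerm B) : IsSignedPerm (A * B) := by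
  obtain ⟨hAr, hAc, hAe⟩ := hA
  obtain ⟨hBr, hBc, hBe⟩ := hB
  choose f hf hf' using hAr
  have hmul : ∀ i j, (A * B) i j = A i (f i) * B (f i) j := by
    intro i j
    rw [Matrix.mul_apply]
    refine Finset.sum_eq_single (f i) (fun k _ hk => ?_) (by simp)
    have : A i k = 0 := by
      by_contra h
      exact hk (hf' i k h)
    rw [this, zero_mul]
  refine ⟨fun i => ?_, fun j => ?_, fun i j h => ?_⟩
  · obtain ⟨j, hj, hj'⟩ := hBr (f i)
    refine ⟨j, ?_, fun j' hne => ?_⟩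
    · show (A * B) i j ≠ 0
      rw [hmul]; exact mul_ne_zero (hf i) hj
    · have hne : (A * B) i j' ≠ 0 := hne
      rw [hmul] at hne
      exact hj' j' (mul_ne_zero_iff.mp hne).2
  · obtain ⟨k, hk, hk'⟩ := hBc j
    obtain ⟨i₀, hi₀, hi₀'⟩ := hAc k
    have hfi₀ : f i₀ = k := (hf' i₀ k hi₀).symm ▸ rfl
    refine ⟨i₀, ?_, fun i hne => ?_⟩
    · show (A * B) i₀ j ≠ 0
      rw [hmul, hfi₀]
      exact mul_ne_zero (hfi₀ ▸ hi₀) hk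
    · have hne : (A * B) i j ≠ 0 := hne
      rw [hmul] at hne
      obtain ⟨h1, h2⟩ := mul_ne_zero_iff.mp hne
      have : f i = k := hk' (f i) h2
      exact hi₀' i (this ▸ h1)
  · rw [hmul] at h ⊢
    obtain ⟨h1, h2⟩ := mul_ne_zero_iff.mp h
    rcases hAe i (f i) h1 with ha | ha <;> rcases hBe (f i) j h2 with hb | hb <;>
      rw [ha, hb] <;> norm_num

lemma IsSignedPerm.transpose {n : ℕ} {A : Matrix (Fin n) (Fin n) ℝ}
    (hA : IsSignedPerm A) : IsSignedPerm A.transpose := by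
  obtain ⟨hr, hc, he⟩ := hA
  exact ⟨fun i => hc i, fun j => hr j, fun i j h => he j i h⟩

/-- `B(n)`, the subgroup of `O(n)` consisting of signed permutation matrices. -/
def Bn (n : ℕ) : Subgroup (On n) where
  carrier := {A | IsSignedPerm (A : Matrix (Fin n) (Fin n) ℝ)}
  one_mem' := IsSignedPerm.one
  mul_mem' := fun ha hb => ha.mul hb
  inv_mem' := by
    intro a ha
    show IsSignedPerm ((a⁻¹ : On n) : Matrix (Fin n) (Fin n) ℝ)
    rw [Matrix.UnitaryGroup.inv_val, Matrix.star_eq_conjTranspose,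
      Matrix.conjTranspose_eq_transpose_of_trivial]
    exact IsSignedPerm.transpose ha

/-- `D(n) = B(n) ∩ SO(n)`, as a subgroup of `SO(n)`:
the signed permutation matrices of determinant `1`. -/
def Dn (n : ℕ) : Subgroup (SO n) := (Bn n).comap (SO n).subtype

namespace Stmt10Aux
open Complex

noncomputable def zC (A : On 2) : ℂ :=
  ((A : Matrix (Fin 2) (Fin 2) ℝ) 0 0 : ℂ) + ((A : Matrix (Fin 2) (Fin 2) ℝ) 1 0 : ℂ) * I

def eR (A : On 2) : ℝ :=
  (A : Matrix (Fin 2) (Fin 2) ℝ) 0 0 * (A : Matrix (Fin 2) (Fin 2) ℝ) 1 1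
    - (A : Matrix (Fin 2) (Fin 2) ℝ) 0 1 * (A : Matrix (Fin 2) (Fin 2) ℝ) 1 0

lemma ortho_entries (A : On 2) :
    ((A : Matrix (Fin 2) (Fin 2) ℝ) 0 0)^2 + ((A : Matrix (Fin 2) (Fin 2) ℝ) 1 0)^2 = 1 ∧
    ((A : Matrix (Fin 2) (Fin 2) ℝ) 0 1)^2 + ((A : Matrix (Fin 2) (Fin 2) ℝ) 1 1)^2 = 1 ∧
    (A : Matrix (Fin 2) (Fin 2) ℝ) 0 0 * (A : Matrix (Fin 2) (Fin 2) ℝ) 0 1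
      + (A : Matrix (Fin 2) (Fin 2) ℝ) 1 0 * (A : Matrix (Fin 2) (Fin 2) ℝ) 1 1 = 0 := by
  have h := Matrix.UnitaryGroup.star_mul_self A
  have h' : ∀ i j, (star (A : Matrix (Fin 2) (Fin 2) ℝ) * (A : Matrix (Fin 2) (Fin 2) ℝ)) i j
      = (1 : Matrix (Fin 2) (Fin 2) ℝ) i j := fun i j => by rw [h]
  have h00 := h' 0 0
  have h11 := h' 1 1
  have h01 := h' 0 1
  simp [Matrix.mul_apply, Fin.sum_univ_two, Matrix.star_apply, Matrix.one_apply,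
    Matrix.star_eq_conjTranspose, Matrix.conjTranspose_apply] at h00 h11 h01
  refine ⟨by nlinarith, by nlinarith, by nlinarith⟩

lemma key_rel {a b c d : ℝ} (h1 : a^2 + c^2 = 1) (h2 : b^2 + d^2 = 1)
    (h3 : a*b + c*d = 0) :
    d = (a*d - b*c) * a ∧ b = -((a*d - b*c) * c) ∧ (a*d - b*c)^2 = 1 := by
  refine ⟨by linear_combination c*h3 - d*h1, by linear_combination a*h3 - b*h1,
    by linear_combination (b^2+d^2)*h1 + h2 - (a*b+c*d)*h3⟩

lemma rels (A : On 2) :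
    (A : Matrix (Fin 2) (Fin 2) ℝ) 1 1 = eR A * (A : Matrix (Fin 2) (Fin 2) ℝ) 0 0 ∧
    (A : Matrix (Fin 2) (Fin 2) ℝ) 0 1 = -(eR A * (A : Matrix (Fin 2) (Fin 2) ℝ) 1 0) ∧
    eR A ^ 2 = 1 := by
  obtain ⟨h1, h2, h3⟩ := ortho_entries A
  obtain ⟨k1, k2, k3⟩ := key_rel h1 h2 h3
  exact ⟨by rw [eR]; linarith [k1], by rw [eR]; linarith [k2], by rw [eR]; linarith [k3]⟩

lemma normSq_zC (A : On 2) : normSq (zC A) = 1 := by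
  rw [zC, normSq_add_mul_I]
  exact (ortho_entries A).1

lemma abs_zC_pow (A : On 2) : ‖zC A ^ 4‖ = 1 := by
  have h := normSq_zC A
  have h2 : ‖zC A‖ ^ 2 = 1 := by rw [← normSq_eq_norm_sq]; exact h
  have h3 : ‖zC A‖ = 1 := by nlinarith [norm_nonneg (zC A)]
  rw [norm_pow, h3, one_pow]

lemma zC_mul (A M : On 2) :
    zC (A * M) = zC A * (((M : Matrix (Fin 2) (Fin 2) ℝ) 0 0 : ℂ)
      + (eR A : ℂ) * ((M : Matrix (Fin 2) (Fin 2) ℝ) 1 0 : ℂ) * I) := by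
  obtain ⟨hd, hb, he⟩ := rels A
  have hm : ((A * M : On 2) : Matrix (Fin 2) (Fin 2) ℝ)
      = (A : Matrix (Fin 2) (Fin 2) ℝ) * (M : Matrix (Fin 2) (Fin 2) ℝ) := rfl
  rw [zC, zC, hm]
  simp only [Matrix.mul_apply, Fin.sum_univ_two]
  rw [hb, hd]
  push_cast
  linear_combination (-(eR A * (A : Matrix (Fin 2) (Fin 2) ℝ) 1 0
    * (M : Matrix (Fin 2) (Fin 2) ℝ) 1 0) : ℂ) * Complex.I_sq


lemma parts_of_eq {x y : ℝ} {w : ℂ} (h : (x:ℂ) + y*I = w) : x = w.re ∧ y = w.im := by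
  have hr := congrArg Complex.re h
  have hi := congrArg Complex.im h
  simp at hr hi
  exact ⟨hr, hi⟩

lemma col_mul_zero {M : On 2} (hM : M ∈ Bn 2) :
    (M : Matrix (Fin 2) (Fin 2) ℝ) 0 0 * (M : Matrix (Fin 2) (Fin 2) ℝ) 1 0 = 0 := by
  have hM' : IsSignedPerm (M : Matrix (Fin 2) (Fin 2) ℝ) := hM
  obtain ⟨-, hc, -⟩ := hM'
  obtain ⟨i, hi, hi'⟩ := hc 0
  by_contra h
  have h0 : (M : Matrix (Fin 2) (Fin 2) ℝ) 0 0 ≠ 0 := fun h' => h (by rw [h', zero_mul])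
  have h1 : (M : Matrix (Fin 2) (Fin 2) ℝ) 1 0 ≠ 0 := fun h' => h (by rw [h', mul_zero])
  have := (hi' 0 h0).trans (hi' 1 h1).symm
  simp at this

lemma w_pow4 {e m0 m1 : ℝ} (he : e^2 = 1) (hn : m0^2 + m1^2 = 1) (hz : m0 * m1 = 0) :
    ((m0 : ℂ) + (e:ℂ)*(m1:ℂ)*I)^4 = 1 := by
  rcases mul_eq_zero.mp hz with h | h
  · have hm : (e*m1)^2 = 1 := by nlinarith
    have : ((m0 : ℂ) + (e:ℂ)*(m1:ℂ)*I)^4 = (((e*m1)^2 : ℝ):ℂ)^2 * (I^2)^2 := by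
      rw [h]; push_cast; ring
    rw [this, hm, I_sq]; norm_num
  · have hm : m0^2 = 1 := by nlinarith
    have : ((m0 : ℂ) + (e:ℂ)*(m1:ℂ)*I)^4 = (((m0)^2 : ℝ):ℂ)^2 := by
      rw [h]; push_cast; ring
    rw [this, hm]; norm_num

lemma zC_pow4_mul_mem {A M : On 2} (hM : M ∈ Bn 2) : zC (A * M)^4 = zC A ^4 := by
  rw [zC_mul, mul_pow]
  rw [w_pow4 (rels A).2.2 (ortho_entries M).1 (col_mul_zero hM), mul_one]

lemma sp_diag {A : Matrix (Fin 2) (Fin 2) ℝ} (h01 : A 0 1 = 0) (h10 : A 1 0 = 0)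
    (h00 : A 0 0 = 1 ∨ A 0 0 = -1) (h11 : A 1 1 = 1 ∨ A 1 1 = -1) : IsSignedPerm A := by
  have n00 : A 0 0 ≠ 0 := by rcases h00 with h|h <;> rw [h] <;> norm_num
  have n11 : A 1 1 ≠ 0 := by rcases h11 with h|h <;> rw [h] <;> norm_num
  refine ⟨fun i => ?_, fun j => ?_, fun i j h => ?_⟩
  · fin_cases i
    · exact ⟨0, n00, fun j hj => by fin_cases j <;> simp_all⟩
    · exact ⟨1, n11, fun j hj => by fin_cases j <;> simp_all⟩
  · fin_cases j
    · exact ⟨0, n00, fun i hi => by fin_cases i <;> simp_all⟩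
    · exact ⟨1, n11, fun i hi => by fin_cases i <;> simp_all⟩
  · fin_cases i <;> fin_cases j <;> first | exact h00 | exact h11 | simp_all

lemma sp_anti {A : Matrix (Fin 2) (Fin 2) ℝ} (h00 : A 0 0 = 0) (h11 : A 1 1 = 0)
    (h01 : A 0 1 = 1 ∨ A 0 1 = -1) (h10 : A 1 0 = 1 ∨ A 1 0 = -1) : IsSignedPerm A := by
  have n01 : A 0 1 ≠ 0 := by rcases h01 with h|h <;> rw [h] <;> norm_num
  have n10 : A 1 0 ≠ 0 := by rcases h10 with h|h <;> rw [h] <;> norm_num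
  refine ⟨fun i => ?_, fun j => ?_, fun i j h => ?_⟩
  · fin_cases i
    · exact ⟨1, n01, fun j hj => by fin_cases j <;> simp_all⟩
    · exact ⟨0, n10, fun j hj => by fin_cases j <;> simp_all⟩
  · fin_cases j
    · exact ⟨1, n10, fun i hi => by fin_cases i <;> simp_all⟩
    · exact ⟨0, n01, fun i hi => by fin_cases i <;> simp_all⟩
  · fin_cases i <;> fin_cases j <;> first | exact h01 | exact h10 | simp_all

lemma eR_cases (A : On 2) : eR A = 1 ∨ eR A = -1 := by
  have he := (rels A).2.2
  exact mul_self_eq_one_iff.mp (by nlinarith)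

lemma mem_Bn_of_pow4 {C : On 2} (h : zC C ^ 4 = 1) : C ∈ Bn 2 := by
  obtain ⟨hd, hb, -⟩ := rels C
  have he' := eR_cases C
  have hz : zC C = 1 ∨ zC C = -1 ∨ zC C = I ∨ zC C = -I := by
    have h2 : (zC C ^ 2 - 1) * (zC C ^ 2 + 1) = 0 := by linear_combination h
    rcases mul_eq_zero.mp h2 with h2 | h2
    · have h3 : (zC C - 1) * (zC C + 1) = 0 := by linear_combination h2
      rcases mul_eq_zero.mp h3 with h3 | h3
      · exact Or.inl (by linear_combination h3)
      · exact Or.inr (Or.inl (by linear_combination h3))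
    · have h3 : (zC C - I) * (zC C + I) = 0 := by linear_combination h2 - Complex.I_sq
      rcases mul_eq_zero.mp h3 with h3 | h3
      · exact Or.inr (Or.inr (Or.inl (by linear_combination h3)))
      · exact Or.inr (Or.inr (Or.inr (by linear_combination h3)))
  show IsSignedPerm (C : Matrix (Fin 2) (Fin 2) ℝ)
  rw [zC] at hz
  rcases hz with hz | hz | hz | hz <;>
    obtain ⟨ha, hc⟩ := parts_of_eq hz <;> simp at ha hc
  · refine sp_diag (by rw [hb, hc, mul_zero, neg_zero]) hc (Or.inl ha) ?_
    rcases he' with h|h <;> rw [hd, h, ha] <;> norm_num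
  · refine sp_diag (by rw [hb, hc, mul_zero, neg_zero]) hc (Or.inr ha) ?_
    rcases he' with h|h <;> rw [hd, h, ha] <;> norm_num
  · refine sp_anti ha (by rw [hd, ha, mul_zero]) ?_ (Or.inl hc)
    rcases he' with h|h <;> rw [hb, h, hc] <;> norm_num
  · refine sp_anti ha (by rw [hd, ha, mul_zero]) ?_ (Or.inr hc)
    rcases he' with h|h <;> rw [hb, h, hc] <;> norm_num

lemma conj_pow4_mul_self (B : On 2) :
    (starRingEnd ℂ) (zC B ^ 4) * (zC B ^ 4) = 1 := by
  rw [← Complex.normSq_eq_conj_mul_self]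
  rw [map_pow, normSq_zC]
  norm_num

lemma zC_inv_mul_pow4 {A B : On 2} (h : zC A ^ 4 = zC B ^ 4) : zC (A⁻¹ * B) ^ 4 = 1 := by
  obtain ⟨hd, hb, -⟩ := rels A
  have hm : ((A⁻¹ * B : On 2) : Matrix (Fin 2) (Fin 2) ℝ)
      = star (A : Matrix (Fin 2) (Fin 2) ℝ) * (B : Matrix (Fin 2) (Fin 2) ℝ) := rfl
  have hz : zC (A⁻¹ * B)
      = ((((A : Matrix (Fin 2) (Fin 2) ℝ) 0 0 * (B : Matrix (Fin 2) (Fin 2) ℝ) 0 0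
          + (A : Matrix (Fin 2) (Fin 2) ℝ) 1 0 * (B : Matrix (Fin 2) (Fin 2) ℝ) 1 0 : ℝ)) : ℂ)
        + ((((A : Matrix (Fin 2) (Fin 2) ℝ) 0 1 * (B : Matrix (Fin 2) (Fin 2) ℝ) 0 0
          + (A : Matrix (Fin 2) (Fin 2) ℝ) 1 1 * (B : Matrix (Fin 2) (Fin 2) ℝ) 1 0 : ℝ)) : ℂ) * I := by
    rw [zC, hm]
    simp only [Matrix.mul_apply, Fin.sum_univ_two, Matrix.star_eq_conjTranspose,
      Matrix.conjTranspose_apply, star_trivial]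
  rcases eR_cases A with he | he
  · have key : zC (A⁻¹ * B) = (starRingEnd ℂ) (zC A) * zC B := by
      rw [hz, zC, zC, map_add, map_mul, conj_ofReal, conj_ofReal, conj_I, hb, hd, he]
      push_cast
      linear_combination (((A : Matrix (Fin 2) (Fin 2) ℝ) 1 0 : ℝ) : ℂ)
        * (((B : Matrix (Fin 2) (Fin 2) ℝ) 1 0 : ℝ) : ℂ) * Complex.I_sq
    rw [key, mul_pow, ← map_pow, h]
    exact conj_pow4_mul_self B
  · have key : zC (A⁻¹ * B) = zC A * (starRingEnd ℂ) (zC B) := by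
      rw [hz, zC, zC, map_add, map_mul, conj_ofReal, conj_ofReal, conj_I, hb, hd, he]
      push_cast
      linear_combination (((A : Matrix (Fin 2) (Fin 2) ℝ) 1 0 : ℝ) : ℂ)
        * (((B : Matrix (Fin 2) (Fin 2) ℝ) 1 0 : ℝ) : ℂ) * Complex.I_sq
    rw [key, mul_pow, ← map_pow, h, mul_comm]
    exact conj_pow4_mul_self B

noncomputable def fC (A : On 2) : Circle :=
  ⟨zC A ^ 4, by
    show zC A ^ 4 ∈ Metric.sphere (0:ℂ) 1
    rw [mem_sphere_zero_iff_norm]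
    exact abs_zC_pow A⟩

lemma fC_mul_mem {A M : On 2} (hM : M ∈ Bn 2) : fC (A * M) = fC A :=
  Subtype.ext (zC_pow4_mul_mem hM)

lemma continuous_fC : Continuous fC := by
  apply Continuous.subtype_mk
  apply Continuous.pow
  apply Continuous.add
  · exact Complex.continuous_ofReal.comp (continuous_subtype_val.matrix_elem 0 0)
  · exact (Complex.continuous_ofReal.comp (continuous_subtype_val.matrix_elem 1 0)).mul
      continuous_const

noncomputable def rotO (z : Circle) : On 2 :=
  ⟨!![(z:ℂ).re, -(z:ℂ).im; (z:ℂ).im, (z:ℂ).re], by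
    have hz : (z:ℂ).re^2 + (z:ℂ).im^2 = 1 := by
      have h := Circle.normSq_coe z
      rw [Complex.normSq_apply] at h
      nlinarith
    rw [Matrix.mem_orthogonalGroup_iff]
    have hstar : star (!![(z:ℂ).re, -(z:ℂ).im; (z:ℂ).im, (z:ℂ).re])
        = !![(z:ℂ).re, (z:ℂ).im; -(z:ℂ).im, (z:ℂ).re] := by
      rw [Matrix.star_eq_conjTranspose, Matrix.conjTranspose_eq_transpose_of_trivial]
      exact (Matrix.transposeᵣ_eq _).symm
    rw [← Matrix.conjTranspose_eq_transpose_of_trivial, ← Matrix.star_eq_conjTranspose,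
      hstar, Matrix.mul_fin_two]
    have e1 : (z:ℂ).re * (z:ℂ).re + -(z:ℂ).im * -(z:ℂ).im = 1 := by nlinarith
    have e2 : (z:ℂ).re * (z:ℂ).im + -(z:ℂ).im * (z:ℂ).re = 0 := by ring
    have e3 : (z:ℂ).im * (z:ℂ).re + (z:ℂ).re * -(z:ℂ).im = 0 := by ring
    have e4 : (z:ℂ).im * (z:ℂ).im + (z:ℂ).re * (z:ℂ).re = 1 := by nlinarith
    rw [e1, e2, e3, e4, Matrix.one_fin_two]⟩

lemma zC_rotO (z : Circle) : zC (rotO z) = (z : ℂ) := by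
  rw [zC]
  show ((!![(z:ℂ).re, -(z:ℂ).im; (z:ℂ).im, (z:ℂ).re] 0 0 : ℝ) : ℂ)
    + ((!![(z:ℂ).re, -(z:ℂ).im; (z:ℂ).im, (z:ℂ).re] 1 0 : ℝ) : ℂ) * I = z
  simp [Complex.re_add_im]

lemma fC_surjective : Function.Surjective fC := by
  intro ζ
  refine ⟨rotO (Circle.exp (Complex.arg (ζ:ℂ) / 4)), ?_⟩
  apply Circle.coe_injective
  show zC _ ^ 4 = (ζ : ℂ)
  rw [zC_rotO, Circle.coe_exp, ← Complex.exp_nat_mul]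
  rw [(by push_cast; ring : ((4:ℕ):ℂ) * ((Complex.arg (ζ:ℂ) / 4 : ℝ) * I)
    = (Complex.arg (ζ:ℂ) : ℂ) * I)]
  rw [← Circle.coe_exp, Circle.exp_arg]

def Kbox : Set (Matrix (Fin 2) (Fin 2) ℝ) :=
  Set.pi Set.univ (fun _ : Fin 2 => Set.pi Set.univ fun _ : Fin 2 => Set.Icc (-1:ℝ) 1)

lemma isCompact_Kbox : IsCompact Kbox :=
  isCompact_univ_pi fun _ => isCompact_univ_pi fun _ => isCompact_Icc

lemma On_subset_Kbox :
    (Matrix.orthogonalGroup (Fin 2) ℝ : Set (Matrix (Fin 2) (Fin 2) ℝ)) ⊆ Kbox := by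
  intro A hA
  have h := Matrix.mem_unitaryGroup_iff'.mp hA
  have hcol : ∀ j, A 0 j * A 0 j + A 1 j * A 1 j = 1 := by
    intro j
    have h2 : (star A * A) j j = (1 : Matrix (Fin 2) (Fin 2) ℝ) j j := by rw [h]
    simpa [Matrix.mul_apply, Fin.sum_univ_two, Matrix.star_eq_conjTranspose,
      Matrix.conjTranspose_apply, Matrix.one_apply] using h2
  have hb : ∀ i j, A i j ∈ Set.Icc (-1:ℝ) 1 := by
    rw [Fin.forall_fin_two]
    constructor <;> intro j <;> rw [Set.mem_Icc] <;>
      exact ⟨by nlinarith [hcol j], by nlinarith [hcol j]⟩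
  exact fun i _ j _ => hb i j

instance : CompactSpace (On 2) := by
  apply isCompact_iff_compactSpace.mp
  apply isCompact_Kbox.of_isClosed_subset ?_ On_subset_Kbox
  have hcont : Continuous fun A : Matrix (Fin 2) (Fin 2) ℝ => star A * A :=
    (continuous_id.star).matrix_mul continuous_id
  have hcont' : Continuous fun A : Matrix (Fin 2) (Fin 2) ℝ => A * star A :=
    continuous_id.matrix_mul (continuous_id.star)
  have hset : (Matrix.orthogonalGroup (Fin 2) ℝ : Set (Matrix (Fin 2) (Fin 2) ℝ))
      = {A | star A * A = 1} ∩ {A | A * star A = 1} := by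
    ext A
    exact Unitary.mem_iff
  rw [hset]
  exact (isClosed_eq hcont continuous_const).inter (isClosed_eq hcont' continuous_const)

end Stmt10Aux

/-- The coset space `O(2)/B₂` is homeomorphic to the circle `S¹`. -/
theorem stmt10 : Nonempty ((On 2 ⧸ Bn 2) ≃ₜ Circle) := by
  classical
  have hresp : ∀ a b : On 2, (QuotientGroup.leftRel (Bn 2)) a b →
      Stmt10Aux.fC a = Stmt10Aux.fC b := by
    intro a b hab
    rw [QuotientGroup.leftRel_apply] at hab
    have h := Stmt10Aux.fC_mul_mem (A := a) hab
    rw [mul_inv_cancel_left] at h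
    exact h.symm
  let F : (On 2 ⧸ Bn 2) → Circle := Quotient.lift Stmt10Aux.fC hresp
  have hcont : Continuous F := Stmt10Aux.continuous_fC.quotient_lift hresp
  have hinj : Function.Injective F := by
    intro x y
    refine Quotient.inductionOn₂ x y fun a b h => ?_
    exact Quotient.sound (QuotientGroup.leftRel_apply.mpr
      (Stmt10Aux.mem_Bn_of_pow4 (Stmt10Aux.zC_inv_mul_pow4 (Subtype.ext_iff.mp h))))
  have hsurj : Function.Surjective F := by
    intro ζ
    obtain ⟨A, hA⟩ := Stmt10Aux.fC_surjective ζ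
    exact ⟨Quotient.mk _ A, hA⟩
  exact ⟨Continuous.homeoOfEquivCompactToT2 (f := Equiv.ofBijective F ⟨hinj, hsurj⟩) hcont⟩
end
end

section
/- Let G be a connected simple graph on a finite vertex type V and let H be a subgraph of G. Then there exists a spanning tree T of G such that for every connected component C of H, the intersection of T with C is a spanning tree of C; that is, the subgraph T ⊓ H restricted to the vertices of C contains every vertex of C, is connected, and is acyclic. -/
open SimpleGraph

section Aux

variable {V : Type*}

private lemma sup_edge_isAcyclic {F : SimpleGraph V} {u v : V} (hF : F.IsAcyclic)
    (hnr : ¬ F.Reachable u v) : (F ⊔ SimpleGraph.edge u v).IsAcyclic := by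
  have hne : u ≠ v := fun h => hnr (h ▸ Reachable.refl u)
  intro w c hc
  by_cases he : s(u, v) ∈ c.edges
  · have hreach := (adj_and_reachable_delete_edges_iff_exists_cycle.mpr ⟨w, c, hc, he⟩).2
    apply hnr
    refine hreach.mono (fun a b hab => ?_)
    obtain ⟨h1, h2⟩ := hab
    cases h1 with
    | inl h => exact h
    | inr h =>
      exfalso
      apply h2
      rw [fromEdgeSet_adj]
      rw [edge_adj] at h
      refine ⟨?_, h.2⟩
      rcases h.1 with ⟨rfl, rfl⟩ | ⟨rfl, rfl⟩
      · rfl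
      · exact Sym2.eq_swap
  · refine hF (c.transfer F fun e he2' => ?_) (hc.transfer _)
    have := c.edges_subset_edgeSet he2'
    rw [edgeSet_sup] at this
    cases this with
    | inl h => exact h
    | inr h =>
      exfalso
      rw [SimpleGraph.edge, edgeSet_fromEdgeSet] at h
      obtain ⟨h1, -⟩ := h
      rw [Set.mem_singleton_iff] at h1
      exact he (h1 ▸ he2')

private lemma maximal_adj_reachable {A B F : SimpleGraph V}
    (hmax : Maximal (fun X => X ≤ A ∧ B ≤ X ∧ X.IsAcyclic) F) {u v : V} (h : A.Adj u v) :
    F.Reachable u v := by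
  by_contra hnr
  have hne : u ≠ v := h.ne
  have hP : (F ⊔ SimpleGraph.edge u v) ≤ A ∧ B ≤ (F ⊔ SimpleGraph.edge u v) ∧
      (F ⊔ SimpleGraph.edge u v).IsAcyclic := by
    refine ⟨sup_le hmax.prop.1 ?_, hmax.prop.2.1.trans le_sup_left,
      sup_edge_isAcyclic hmax.prop.2.2 hnr⟩
    intro a b hab
    rw [edge_adj] at hab
    rcases hab.1 with ⟨rfl, rfl⟩ | ⟨rfl, rfl⟩
    · exact h
    · exact h.symm
  have hle := hmax.le_of_ge hP le_sup_left
  have : F.Adj u v := hle (Or.inr ((edge_adj (s := u) (t := v) u v).2 ⟨Or.inl ⟨rfl, rfl⟩, hne⟩))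
  exact hnr this.reachable

private lemma maximal_reachable {A B F : SimpleGraph V}
    (hmax : Maximal (fun X => X ≤ A ∧ B ≤ X ∧ X.IsAcyclic) F) {u v : V}
    (h : A.Reachable u v) : F.Reachable u v := by
  obtain ⟨p⟩ := h
  induction p with
  | nil => exact Reachable.refl _
  | cons h' p ih => exact (maximal_adj_reachable hmax h').trans ih

private lemma spanningCoe_walk_lift {G : SimpleGraph V} {K : G.Subgraph} :
    ∀ {a b : V}, K.spanningCoe.Walk a b → ∀ ha : a ∈ K.verts,
      ∃ hb : b ∈ K.verts, K.coe.Reachable ⟨a, ha⟩ ⟨b, hb⟩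
  | _, _, Walk.nil, ha => ⟨ha, Reachable.refl _⟩
  | _, _, Walk.cons hxy q, ha => by
    have hxy' : K.Adj _ _ := hxy
    have hy := hxy'.snd_mem
    obtain ⟨hb, hr⟩ := spanningCoe_walk_lift q hy
    exact ⟨hb, (hxy'.coe).reachable.trans hr⟩

private lemma reachable_induce_coe {G : SimpleGraph V} {K : G.Subgraph} {S : Set V}
    {F : SimpleGraph V} (hFK : ∀ x y, F.Adj x y → K.Adj x y) :
    ∀ {a b : V} (p : F.Walk a b), (∀ w ∈ p.support, w ∈ S) →
      ∀ (ha : a ∈ (K.induce S).verts) (hb : b ∈ (K.induce S).verts),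
      (K.induce S).coe.Reachable ⟨a, ha⟩ ⟨b, hb⟩
  | _, _, Walk.nil, _, ha, hb => Reachable.refl _
  | _, _, Walk.cons (u := x) (v := y) hxy q, hs, ha, hb => by
    have hx : x ∈ S := hs x (by simp)
    have hy : y ∈ S := hs y (by simp)
    have hadj : (K.induce S).coe.Adj ⟨x, ha⟩ ⟨y, hy⟩ := by
      exact ⟨hx, hy, hFK _ _ hxy⟩
    exact hadj.reachable.trans
      (reachable_induce_coe hFK q (fun w hw => hs w (by simp [hw])) hy hb)

end Aux

/-- A spanning tree of `G` intersecting a given subgraph `H` in a spanning tree of each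
connected component of `H`. -/
theorem stmt15 {V : Type*} [Fintype V] (G : SimpleGraph V) (hG : G.Connected)
    (H : G.Subgraph) :
    ∃ T : G.Subgraph, T.IsSpanning ∧ T.coe.IsTree ∧
      ∀ C : H.coe.ConnectedComponent,
        (Subtype.val '' C.supp ⊆ (T ⊓ H).verts) ∧
        ((T ⊓ H).induce (Subtype.val '' C.supp)).coe.IsTree := by
  classical
  set H' := H.spanningCoe with hH'def
  -- maximal acyclic subgraph of H'
  have h0 : (⊥ : SimpleGraph V) ≤ H' ∧ (⊥ : SimpleGraph V) ≤ (⊥ : SimpleGraph V) ∧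
      (⊥ : SimpleGraph V).IsAcyclic := ⟨bot_le, le_rfl, isAcyclic_bot⟩
  obtain ⟨F, -, hF⟩ := Finite.exists_le_maximal (p := fun X : SimpleGraph V => X ≤ H' ∧ (⊥ : SimpleGraph V) ≤ X ∧ X.IsAcyclic) h0
  -- maximal acyclic subgraph of G containing F
  have h1 : F ≤ G ∧ F ≤ F ∧ F.IsAcyclic :=
    ⟨hF.prop.1.trans H.spanningCoe_le, le_rfl, hF.prop.2.2⟩
  obtain ⟨T', -, hT⟩ := Finite.exists_le_maximal (p := fun X : SimpleGraph V => X ≤ G ∧ F ≤ X ∧ X.IsAcyclic) h1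
  have hT'le : T' ≤ G := hT.prop.1
  have hT'acyclic : T'.IsAcyclic := hT.prop.2.2
  have hFT' : F ≤ T' := hT.prop.2.1
  have hFacyclic : F.IsAcyclic := hF.prop.2.2
  have hFH' : F ≤ H' := hF.prop.1
  set T : G.Subgraph := SimpleGraph.toSubgraph T' hT'le with hTdef
  have hTspan : T.IsSpanning := SimpleGraph.toSubgraph.isSpanning T' hT'le
  -- reachability in T'
  have hT'reach : ∀ u v : V, T'.Reachable u v := fun u v =>
    maximal_reachable hT (hG.preconnected u v)
  -- key : T' ⊓ H' = F
  have hkey : T' ⊓ H' = F := by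
    apply le_antisymm
    · refine hF.le_of_ge ⟨inf_le_right, bot_le, fun w c hc => ?_⟩ (le_inf hFT' hFH')
      exact hT'acyclic (c.mapLe inf_le_left) (hc.mapLe _)
    · exact le_inf hFT' hFH'
  have hadjTH : ∀ a b : V, (T ⊓ H).Adj a b ↔ F.Adj a b := by
    intro a b
    rw [Subgraph.inf_adj, ← hkey, inf_adj]
    rfl
  have hVne : Nonempty V := hG.nonempty
  refine ⟨T, hTspan, ?_, ?_⟩
  · -- T.coe is a tree
    constructor
    · rw [connected_iff]
      constructor
      · rintro ⟨u, hu⟩ ⟨v, hv⟩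
        obtain ⟨p⟩ := hT'reach u v
        obtain ⟨hb, hr⟩ := spanningCoe_walk_lift (K := T) p hu
        exact hr
      · exact ⟨⟨Classical.arbitrary V, hTspan _⟩⟩
    · intro w c hc
      have : (c.map ⟨Subtype.val, fun h => h⟩ : T'.Walk _ _).IsCycle :=
        hc.map Subtype.val_injective
      exact hT'acyclic _ this
  · intro C
    set S : Set V := Subtype.val '' C.supp with hSdef
    have hSsub : S ⊆ (T ⊓ H).verts := by
      rintro _ ⟨x, hx, rfl⟩
      exact ⟨hTspan _, x.2⟩
    refine ⟨hSsub, ?_⟩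
    -- every vertex F-reachable from a vertex of S is in S
    have hstay : ∀ (x : H.verts), x ∈ C.supp → ∀ w : V, F.Reachable (x : V) w → w ∈ S := by
      rintro x hx w hr
      obtain ⟨p⟩ := hr.mono hFH'
      obtain ⟨hw, hr'⟩ := spanningCoe_walk_lift (K := H) p x.2
      refine ⟨⟨w, hw⟩, ?_, rfl⟩
      rw [SimpleGraph.ConnectedComponent.mem_supp_iff]
      have hx' : H.coe.connectedComponentMk x = C := by
        rwa [SimpleGraph.ConnectedComponent.mem_supp_iff] at hx
    
      rw [← hx']
      have : (⟨(x : V), x.2⟩ : H.verts) = x := rfl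
      exact (ConnectedComponent.sound (this ▸ hr')).symm
    constructor
    · -- connected
      rw [connected_iff]
      constructor
      · rintro ⟨a, ha⟩ ⟨b, hb⟩
        obtain ⟨x, hx, hxa⟩ := ha
        obtain ⟨y, hy, hyb⟩ := hb
        -- F.Reachable a b
        have hreachH : H'.Reachable a b := by
          have : H.coe.Reachable x y := by
            rw [SimpleGraph.ConnectedComponent.mem_supp_iff] at hx hy
            exact SimpleGraph.ConnectedComponent.exact (hx.trans hy.symm)
          have := this.map (⟨Subtype.val, fun h => h⟩ : H.coe →g H.spanningCoe)
          rwa [show ((⟨Subtype.val, fun h => h⟩ : H.coe →g H.spanningCoe) x : V) = a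
              from hxa, show ((⟨Subtype.val, fun h => h⟩ : H.coe →g H.spanningCoe) y : V) = b
              from hyb] at this
        have hreachF : F.Reachable a b := maximal_reachable hF hreachH
        obtain ⟨p⟩ := hreachF
        have hsupp : ∀ w ∈ p.support, w ∈ S := by
          intro w hw
          refine hstay x hx w ?_
          rw [show ((x : V)) = a from hxa]
          exact ⟨p.takeUntil w hw⟩
        exact reachable_induce_coe (fun u v h => (hadjTH u v).mpr h) p hsupp
          (⟨x, hx, hxa⟩ : a ∈ S) (⟨y, hy, hyb⟩ : b ∈ S)
      · obtain ⟨x, hx⟩ := C.exists_rep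
        exact ⟨⟨(x : V), ⟨x, (SimpleGraph.ConnectedComponent.mem_supp_iff C x).mpr hx, rfl⟩⟩⟩
    · -- acyclic
      intro w c hc
      let f : ((T ⊓ H).induce S).coe →g F :=
        ⟨Subtype.val, fun {u v} h => (hadjTH u v).mp h.2.2⟩
      exact hFacyclic _ (hc.map (f := f) (fun a b h => Subtype.ext h))
end
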